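/- (Integral Flow / Circulation Theorem) In a circulation problem on a finite directed graph where every arc (v,w) has integer lower bound l(v,w) and integer upper bound u(v,w), if there exists any feasible real-valued circulation (satisfying l ≤ f ≤ u on each arc and flow conservation at every node), then there exists a feasible integer-valued circulation. -/

import Mathlib

/-!
The feasible real circulations form a nonempty compact set, so by Krein–Milman it has an
extreme point `g`, and it suffices to show that `g` is integral. Let `F` be the set of arcs on
which `g` is not an integer. Conservation at a vertex forbids it from meeting exactly one arc
of `F`, so every vertex touched by `F` has degree at least two and `F` touches at most `#F`
vertices. Vanishing off `F` together with conservation at all but one touched vertex (the last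
one follows from the others) are then fewer than `|V|²` linear conditions, so some nonzero
circulation `d` is supported on `F`. Since `g` lies strictly between its integer bounds on `F`,
both `g + t • d` and `g - t • d` are feasible for small `t > 0`, contradicting extremality.
-/

open Finset Topology

section Circulation

variable {V : Type*} [Fintype V]

def IsCirculation {M : Type*} [AddCommMonoid M] (g : V → V → M) : Prop :=
  ∀ v, ∑ w, g w v = ∑ w, g v w

theorem IsCirculation.add_smul {R M : Type*} [Semiring R] [AddCommMonoid M] [Module R M]
    {g d : V → V → M} (hg : IsCirculation g) (hd : IsCirculation d) (t : R) :
    IsCirculation (g + t • d) := fun v => by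
  simp [sum_add_distrib, ← smul_sum, hg v, hd v]

end Circulation

theorem AddSubgroup.apply_mem_of_sum_eq_sum {ι G : Type*} [Fintype ι] [AddCommGroup G]
    (Z : AddSubgroup G) {x y : ι → G} (h : ∑ i, x i = ∑ i, y i) (hy : ∀ i, y i ∈ Z) {a : ι}
    (hx : ∀ i ≠ a, x i ∈ Z) : x a ∈ Z := by
  classical
  have hsum : x a + ∑ i ∈ univ.erase a, x i ∈ Z := by
    rw [add_sum_erase _ _ (mem_univ a), h]
    exact Z.sum_mem fun i _ => hy i
  exact (Z.add_mem_cancel_right (Z.sum_mem fun i hi => hx i (ne_of_mem_erase hi))).mp hsum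

theorem AddSubgroup.card_add_card_ne_one_of_sum_eq_sum {ι G : Type*} [Fintype ι]
    [AddCommGroup G] (Z : AddSubgroup G) {x y : ι → G} (h : ∑ i, x i = ∑ i, y i)
    {s t : Finset ι} (hs : ∀ i, i ∈ s ↔ x i ∉ Z) (ht : ∀ i, i ∈ t ↔ y i ∉ Z) :
    #s + #t ≠ 1 := by
  suffices key : ∀ (x y : ι → G) (s t : Finset ι), ∑ i, x i = ∑ i, y i →
      (∀ i, i ∈ s ↔ x i ∉ Z) → (∀ i, i ∈ t ↔ y i ∉ Z) → #t = 0 → #s ≠ 1 by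
    have := key x y s t h hs ht
    have := key y x t s h.symm ht hs
    omega
  intro x y s t h hs ht ht0 hs1
  obtain ⟨a, rfl⟩ := Finset.card_eq_one.mp hs1
  have hy : ∀ i, y i ∈ Z := fun i => not_not.mp fun hyi => by
    simpa [Finset.card_eq_zero.mp ht0] using (ht i).mpr hyi
  have hx : ∀ i ≠ a, x i ∈ Z := fun i hi => not_not.mp fun hxi =>
    hi (by simpa using (hs i).mpr hxi)
  exact (hs a).mp (mem_singleton_self a) (Z.apply_mem_of_sum_eq_sum h hy hx)

section ArcDegree

variable {V : Type*} [Fintype V] [DecidableEq V]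

def arcDegree (F : Finset (V × V)) (v : V) : ℕ :=
  #{w | (v, w) ∈ F} + #{w | (w, v) ∈ F}

theorem arcDegree_eq_zero_iff {F : Finset (V × V)} {v : V} :
    arcDegree F v = 0 ↔ ∀ w, (v, w) ∉ F ∧ (w, v) ∉ F := by
  simp [arcDegree, filter_eq_empty_iff, forall_and]

theorem sum_arcDegree (F : Finset (V × V)) : ∑ v, arcDegree F v = 2 * #F := by
  have hcard : #F = ∑ v, ∑ w, if (v, w) ∈ F then 1 else 0 := by
    rw [← Fintype.sum_prod_type' fun v w => if (v, w) ∈ F then 1 else 0]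
    simp
  simp only [arcDegree, card_filter, sum_add_distrib]
  rw [sum_comm (f := fun v w => if (w, v) ∈ F then 1 else 0), ← hcard]
  ring

theorem card_arcDegree_ne_zero_le (F : Finset (V × V)) (hF : ∀ v, arcDegree F v ≠ 1) :
    #{v | arcDegree F v ≠ 0} ≤ #F := by
  have h2 : #{v | arcDegree F v ≠ 0} • 2 ≤ ∑ v with arcDegree F v ≠ 0, arcDegree F v :=
    card_nsmul_le_sum _ _ _ fun v hv => by
      have := hF v
      have := (mem_filter.mp hv).2
      omega
  rw [sum_filter_ne_zero, sum_arcDegree, smul_eq_mul] at h2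
  omega

theorem IsCirculation.arcDegree_ne_one {G : Type*} [AddCommGroup G] (Z : AddSubgroup G)
    {g : V → V → G} (hg : IsCirculation g) {F : Finset (V × V)}
    (hF : ∀ v w, (v, w) ∈ F ↔ g v w ∉ Z) (v : V) : arcDegree F v ≠ 1 :=
  Z.card_add_card_ne_one_of_sum_eq_sum (hg v).symm (by simp [hF]) (by simp [hF])

theorem exists_isCirculation_ne_zero (K : Type*) [Field K] {F : Finset (V × V)}
    (hne : F.Nonempty) (hF : ∀ v, arcDegree F v ≠ 1) :
    ∃ d : V → V → K, d ≠ 0 ∧ IsCirculation d ∧ ∀ v w, (v, w) ∉ F → d v w = 0 := by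
  obtain ⟨⟨a, b⟩, hab⟩ := hne
  have ha : arcDegree F a ≠ 0 := fun h => (arcDegree_eq_zero_iff.mp h b).1 hab
  set S : Finset V := ({v | arcDegree F v ≠ 0} : Finset V).erase a with hS
  let Φ : (V → V → K) →ₗ[K] (↥Fᶜ ⊕ ↥S → K) :=
    { toFun := fun d => Sum.elim (fun e => d e.1.1 e.1.2) (fun v => ∑ w, d w v - ∑ w, d v w)
      map_add' := fun d d' => by
        ext (e | v) <;> simp [sum_add_distrib]; ring
      map_smul' := fun c d => by
        ext (e | v) <;> simp [mul_sum, mul_sub] }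
  have hrank : Module.finrank K (↥Fᶜ ⊕ ↥S → K) < Module.finrank K (V → V → K) := by
    have h0 : 0 < #F := card_pos.mpr ⟨_, hab⟩
    have h1 := card_arcDegree_ne_zero_le F hF
    have h2 : #F ≤ Fintype.card V * Fintype.card V := by
      simpa using card_le_univ F
    have h3 := card_erase_of_mem (s := ({v | arcDegree F v ≠ 0} : Finset V)) (by simpa using ha)
    rw [Module.finrank_pi, Module.finrank_pi_fintype]
    simp only [Module.finrank_pi, Fintype.card_sum, Fintype.card_coe, card_compl,
      Fintype.card_prod, sum_const, card_univ, smul_eq_mul, hS, h3]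
    generalize Fintype.card V * Fintype.card V = n at h2 ⊢
    omega
  obtain ⟨d, hd, hd0⟩ := (Submodule.ne_bot_iff _).mp (LinearMap.ker_ne_bot_of_finrank_lt hrank)
  have hkernel : ∀ i, Φ d i = 0 := congr_fun (LinearMap.mem_ker.mp hd)
  have hsupp : ∀ v w, (v, w) ∉ F → d v w = 0 := fun v w h =>
    hkernel (Sum.inl ⟨(v, w), mem_compl.mpr h⟩)
  have hflow : ∀ v ≠ a, ∑ w, d w v - ∑ w, d v w = 0 := by
    intro v hva
    by_cases hv : arcDegree F v = 0
    · have hvF := arcDegree_eq_zero_iff.mp hv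
      simp [hsupp _ _ (hvF _).1, hsupp _ _ (hvF _).2]
    · exact hkernel (Sum.inr ⟨v, mem_erase.mpr ⟨hva, mem_filter.mpr ⟨mem_univ v, hv⟩⟩⟩)
  have htotal : ∑ v, (∑ w, d w v - ∑ w, d v w) = 0 := by
    rw [sum_sub_distrib, sum_comm, sub_self]
  refine ⟨d, hd0, fun v => sub_eq_zero.mp ?_, hsupp⟩
  by_cases hva : v = a
  · subst hva
    exact (sum_eq_single v (fun w _ => hflow w) (by simp)).symm.trans htotal
  · exact hflow v hva

end ArcDegree

section Feasible

variable {V : Type*} [Fintype V]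

def feasibleSet (l u : V → V → ℤ) : Set (V → V → ℝ) :=
  {g | (∀ v w, (l v w : ℝ) ≤ g v w ∧ g v w ≤ u v w) ∧ IsCirculation g}

theorem isCompact_feasibleSet (l u : V → V → ℤ) : IsCompact (feasibleSet l u) := by
  have hclosed : IsClosed {g : V → V → ℝ | IsCirculation g} := by
    simp only [IsCirculation, Set.ofPred_forall]
    exact isClosed_iInter fun v => isClosed_eq (by fun_prop) (by fun_prop)
  convert (isCompact_Icc (a := fun v w => (l v w : ℝ)) (b := fun v w => (u v w : ℝ))).inter_right
    hclosed using 1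
  ext g
  simp [feasibleSet, Pi.le_def, forall_and]

theorem exists_pos_add_smul_mem_feasibleSet {l u : V → V → ℤ} {g d : V → V → ℝ}
    (hg : g ∈ feasibleSet l u) (hd : IsCirculation d)
    (hgd : ∀ v w, d v w ≠ 0 → (l v w : ℝ) < g v w ∧ g v w < u v w) :
    ∃ t : ℝ, 0 < t ∧ ∀ s : ℝ, |s| < t → g + s • d ∈ feasibleSet l u := by
  have hev : ∀ᶠ s in 𝓝 (0 : ℝ), ∀ v w, (l v w : ℝ) ≤ g v w + s * d v w ∧
      g v w + s * d v w ≤ u v w := by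
    refine Filter.eventually_all.mpr fun v => Filter.eventually_all.mpr fun w => ?_
    by_cases hvw : d v w = 0
    · simpa [hvw] using hg.1 v w
    · have hcont : Filter.Tendsto (fun s : ℝ => g v w + s * d v w) (𝓝 0) (𝓝 (g v w)) :=
        (by fun_prop : Continuous fun s : ℝ => g v w + s * d v w).tendsto' 0 _ (by simp)
      filter_upwards [hcont.eventually (Ioo_mem_nhds (hgd v w hvw).1 (hgd v w hvw).2)]
        with s hs using ⟨hs.1.le, hs.2.le⟩
  obtain ⟨t, ht, hball⟩ := Metric.eventually_nhds_iff.mp hev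
  exact ⟨t, ht, fun s hs => ⟨hball (by simpa using hs), hg.2.add_smul hd s⟩⟩

theorem exists_intCast_eq_of_mem_extremePoints {l u : V → V → ℤ} {g : V → V → ℝ}
    (hg : g ∈ (feasibleSet l u).extremePoints ℝ) :
    ∃ n : V → V → ℤ, g = fun v w => (n v w : ℝ) := by
  classical
  set Z := (Int.castAddHom ℝ).range
  suffices h : ∀ v w, g v w ∈ Z by
    choose n hn using h
    exact ⟨n, funext₂ fun v w => by simp [← hn v w]⟩
  by_contra! ⟨a, b, hab⟩
  set F : Finset (V × V) := {e | g e.1 e.2 ∉ Z} with hF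
  obtain ⟨d, hd0, hd, hdF⟩ := exists_isCirculation_ne_zero ℝ (F := F)
    ⟨(a, b), by simpa [hF] using hab⟩ (hg.1.2.arcDegree_ne_one Z (by simp [hF]))
  have hstrict : ∀ v w, d v w ≠ 0 → (l v w : ℝ) < g v w ∧ g v w < u v w := by
    intro v w hvw
    have hfrac : g v w ∉ Z := by simpa [hF] using mt (hdF v w) hvw
    exact ⟨(hg.1.1 v w).1.lt_of_ne fun h => hfrac ⟨l v w, h⟩,
      (hg.1.1 v w).2.lt_of_ne fun h => hfrac ⟨u v w, h.symm⟩⟩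
  obtain ⟨t, ht, hmem⟩ := exists_pos_add_smul_mem_feasibleSet hg.1 hd hstrict
  have hmid : g ∈ openSegment ℝ (g + (t / 2) • d) (g + (-(t / 2)) • d) :=
    ⟨1 / 2, 1 / 2, by norm_num, by norm_num, by norm_num, by module⟩
  have ht2 : |t / 2| < t := by rw [abs_of_pos (by positivity)]; linarith
  have hfix := ((mem_extremePoints.mp hg).2 _ (hmem _ ht2)
    _ (hmem _ (by rwa [abs_neg])) hmid).1
  exact hd0 (smul_right_injective _ (by positivity : t / 2 ≠ 0) (by simpa using hfix))

end Feasible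

theorem stmt7_general {V : Type*} [Fintype V]
    (l u : V → V → ℤ)
    (f : V → V → ℝ)
    (hbound : ∀ v w, (l v w : ℝ) ≤ f v w ∧ f v w ≤ (u v w : ℝ))
    (hcons : ∀ v, ∑ w, f w v = ∑ w, f v w) :
    ∃ g : V → V → ℤ,
      (∀ v w, l v w ≤ g v w ∧ g v w ≤ u v w) ∧
      (∀ v, ∑ w, g w v = ∑ w, g v w) := by
  obtain ⟨g, hg⟩ := (isCompact_feasibleSet l u).extremePoints_nonempty ⟨f, hbound, hcons⟩
  obtain ⟨n, rfl⟩ := exists_intCast_eq_of_mem_extremePoints hg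
  obtain ⟨hbd, hcirc⟩ : (∀ v w, (l v w : ℝ) ≤ n v w ∧ (n v w : ℝ) ≤ u v w) ∧
      ∀ v, ∑ w, (n w v : ℝ) = ∑ w, (n v w : ℝ) := hg.1
  exact ⟨n, fun v w => by exact_mod_cast hbd v w, fun v => by exact_mod_cast hcirc v⟩

/-- Integral circulation theorem: on a finite directed graph with integer lower and upper
arc bounds, if there exists a feasible real-valued circulation then there exists a feasible
integer-valued circulation. -/
theorem stmt7 {V : Type*} [Fintype V]
    (l u : V → V → ℤ) (hlu : ∀ v w, l v w ≤ u v w)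
    (f : V → V → ℝ)
    (hbound : ∀ v w, (l v w : ℝ) ≤ f v w ∧ f v w ≤ (u v w : ℝ))
    (hcons : ∀ v, ∑ w, f w v = ∑ w, f v w) :
    ∃ g : V → V → ℤ,
      (∀ v w, l v w ≤ g v w ∧ g v w ≤ u v w) ∧
      (∀ v, ∑ w, g w v = ∑ w, g v w) :=
  stmt7_general l u f hbound hcons
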